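/- arXiv:2501.08501 — 3 statements merged into one kernel-verified Lean document; each statement's English description precedes it below -/
import Mathlib

section
/- (Kolmogorov–Arnold representation theorem.) Let n ≥ 1 and let f : [0,1]ⁿ → ℝ be continuous. Then there exist continuous functions Φ_q : ℝ → ℝ for q = 0, 1, …, 2n and continuous functions φ_{q,p} : [0,1] → ℝ for q = 0, 1, …, 2n and p = 1, …, n such that for every x = (x₁, …, xₙ) ∈ [0,1]ⁿ, f(x₁, …, xₙ) = Σ_{q=0}^{2n} Φ_q( Σ_{p=1}^{n} φ_{q,p}(x_p) ). -/
/-!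
Kolmogorov's proof. For each of the `2 n + 1` indices `q` take a grid of `[0, 1]` of mesh `1 / m`
whose intervals are separated by short gaps, shifted with `q` so that every point lies in a gap for
at most one `q`; then every point of the cube lies in a grid cube for at least `n + 1` of the
indices. The inner functions are a uniform limit of piecewise-linear functions that are constant on
the intervals of finer and finer grids, with generically perturbed values, so that the inner sum
`∑ p, ψ q p (x p)` maps the cubes of each grid into small, pairwise disjoint neighbourhoods of
distinct values. There an outer function can reproduce `f / (n + 1)` up to the oscillation of `f`
on a cube, while the at most `n` remaining terms stay small: this approximates `f` within
`(4 n + 1) / (4 n + 4) * ‖f‖`. Iterating on the error, a geometric series of outer functions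
converges to an exact representation.
-/

open Set Finset Function Filter Topology unitInterval BoundedContinuousFunction

noncomputable section

/-! ### Ramps, piecewise-linear interpolation and bumps -/

section Interpolation

def ramp (t : ℝ) : ℝ := projIcc 0 1 zero_le_one t

lemma continuous_ramp : Continuous ramp := continuous_subtype_val.comp continuous_projIcc

lemma ramp_of_nonpos {t : ℝ} (ht : t ≤ 0) : ramp t = 0 := by
  simp [ramp, projIcc_of_le_left _ ht]

lemma ramp_of_one_le {t : ℝ} (ht : 1 ≤ t) : ramp t = 1 := by
  simp [ramp, projIcc_of_right_le _ ht]

lemma ramp_mem_Icc (t : ℝ) : ramp t ∈ Icc (0 : ℝ) 1 := (projIcc 0 1 zero_le_one t).2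

variable {a r s : ℕ → ℝ} {e x : ℝ} {k m : ℕ}

lemma sum_range_sub_mul_of_le (hkm : k ≤ m) (h1 : ∀ j < k, r j = 1)
    (h0 : ∀ j, k ≤ j → j < m → r j = 0) :
    ∑ j ∈ range m, (a (j + 1) - a j) * r j = a k - a 0 := by
  rw [← sum_range_add_sum_Ico _ hkm, sum_eq_zero (s := Ico k m) fun j hj ↦ by
    rw [h0 j (mem_Ico.1 hj).1 (mem_Ico.1 hj).2, mul_zero], add_zero, ← sum_range_sub a k]
  exact sum_congr rfl fun j hj ↦ by rw [h1 j (mem_range.1 hj), mul_one]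

lemma sum_range_sub_mul_of_lt (hkm : k < m) (h1 : ∀ j < k, r j = 1)
    (h0 : ∀ j, k < j → j < m → r j = 0) :
    ∑ j ∈ range m, (a (j + 1) - a j) * r j = a k - a 0 + (a (k + 1) - a k) * r k := by
  rw [← sum_range_add_sum_Ico _ hkm, sum_range_succ,
    sum_range_sub_mul_of_le le_rfl h1 (fun j h h' ↦ absurd h' (not_lt.2 h)),
    sum_eq_zero fun j hj ↦ by rw [h0 j (mem_Ico.1 hj).1 (mem_Ico.1 hj).2, mul_zero], add_zero]

/-- The continuous piecewise-linear function that equals `a k` between the ramps `k - 1` and `k`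
and rises linearly from `a k` to `a (k + 1)` on the ramp `[s k, s k + e]`. -/
def rampInterp (a s : ℕ → ℝ) (e : ℝ) (m : ℕ) (x : ℝ) : ℝ :=
  a 0 + ∑ j ∈ range m, (a (j + 1) - a j) * ramp ((x - s j) / e)

lemma continuous_rampInterp (a s : ℕ → ℝ) (e : ℝ) (m : ℕ) : Continuous (rampInterp a s e m) :=
  continuous_const.add <| continuous_finsetSum _ fun _ _ ↦
    continuous_const.mul <| continuous_ramp.comp <| by fun_prop

lemma ramp_div_of_add_le (he : 0 < e) {t : ℝ} (h : t + e ≤ x) : ramp ((x - t) / e) = 1 :=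
  ramp_of_one_le <| (one_le_div he).2 <| by linarith

lemma ramp_div_of_le (he : 0 < e) {t : ℝ} (h : x ≤ t) : ramp ((x - t) / e) = 0 :=
  ramp_of_nonpos <| div_nonpos_of_nonpos_of_nonneg (by linarith) he.le

lemma rampInterp_eq (he : 0 < e) (hkm : k ≤ m) (hlt : ∀ j < k, s j + e ≤ x)
    (hge : ∀ j, k ≤ j → j < m → x ≤ s j) : rampInterp a s e m x = a k := by
  rw [rampInterp, sum_range_sub_mul_of_le hkm (fun j hj ↦ ramp_div_of_add_le he (hlt j hj))
    (fun j hj hjm ↦ ramp_div_of_le he (hge j hj hjm))]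
  ring

lemma rampInterp_mem_uIcc (he : 0 < e) (hkm : k < m) (hlt : ∀ j < k, s j + e ≤ x)
    (hgt : ∀ j, k < j → j < m → x ≤ s j) : rampInterp a s e m x ∈ uIcc (a k) (a (k + 1)) := by
  rw [rampInterp, sum_range_sub_mul_of_lt hkm (fun j hj ↦ ramp_div_of_add_le he (hlt j hj))
    (fun j hj hjm ↦ ramp_div_of_le he (hgt j hj hjm)), ← segment_eq_uIcc, segment_eq_image]
  exact ⟨_, ramp_mem_Icc _, by simp only [smul_eq_mul]; ring⟩

end Interpolation

section Bump

def bump (c r y : ℝ) : ℝ := ramp (2 - |y - c| / r)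

variable {c r y : ℝ}

lemma continuous_bump (c r : ℝ) : Continuous (bump c r) :=
  continuous_ramp.comp <| by fun_prop

lemma bump_mem_Icc (c r y : ℝ) : bump c r y ∈ Icc (0 : ℝ) 1 := ramp_mem_Icc _

lemma bump_eq_one (hr : 0 < r) (h : |y - c| ≤ r) : bump c r y = 1 :=
  ramp_of_one_le <| by linarith [(div_le_one hr).2 h]

lemma abs_sub_lt_of_bump_ne_zero (hr : 0 < r) (h : bump c r y ≠ 0) : |y - c| < 2 * r := by
  by_contra! hy
  exact h <| ramp_of_nonpos <| by linarith [(le_div_iff₀ hr).2 hy]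

theorem exists_bcf_eq_near_of_pairwise {κ : Type*} [Fintype κ] {v w : κ → ℝ} {ρ B : ℝ}
    (hρ : 0 < ρ) (hB : 0 ≤ B) (hv : Pairwise fun i j ↦ ρ ≤ |v i - v j|) (hw : ∀ i, |w i| ≤ B) :
    ∃ Φ : ℝ →ᵇ ℝ, ‖Φ‖ ≤ B ∧ ∀ i y, |y - v i| ≤ ρ / 4 → Φ y = w i := by
  set Φ : ℝ → ℝ := fun y ↦ ∑ i, w i * bump (v i) (ρ / 4) y
  have hr : 0 < ρ / 4 := by positivity
  have single : ∀ i y, bump (v i) (ρ / 4) y ≠ 0 → Φ y = w i * bump (v i) (ρ / 4) y := by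
    refine fun i y hi ↦ sum_eq_single i (fun j _ hji ↦ ?_) (by simp)
    by_contra hj
    have hyj := abs_sub_lt_of_bump_ne_zero hr (right_ne_zero_of_mul hj)
    have hyi := abs_sub_lt_of_bump_ne_zero hr hi
    have htri := abs_sub_le (v j) y (v i)
    rw [abs_sub_comm (v j) y] at htri
    linarith [hv hji]
  have hΦ : ∀ y, ‖Φ y‖ ≤ B := fun y ↦ by
    by_cases h : ∃ i, bump (v i) (ρ / 4) y ≠ 0
    · obtain ⟨i, hi⟩ := h
      rw [single i y hi, Real.norm_eq_abs, abs_mul, abs_of_nonneg (bump_mem_Icc _ _ _).1]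
      exact (mul_le_of_le_one_right (abs_nonneg _) (bump_mem_Icc _ _ _).2).trans (hw i)
    · simp only [not_exists, not_not] at h
      simpa [Φ, h] using hB
  refine ⟨.ofNormedAddCommGroup Φ (continuous_finsetSum _ fun i _ ↦
    continuous_const.mul (continuous_bump _ _)) B hΦ, norm_ofNormedAddCommGroup_le _ hB _,
    fun i y hy ↦ ?_⟩
  have h1 := bump_eq_one hr hy
  simp only [coe_ofNormedAddCommGroup, single i y (by rw [h1]; norm_num), h1, mul_one]

end Bump

/-! ### Finite combinatorics and an iteration principle -/

theorem exists_mem_Ioc_forall_injective_add_mul {κ ι : Type*} [Finite κ] [Finite ι]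
    (S : κ → ι → ℝ) {T : ι → ℝ} (hT : Injective T) {δ : ℝ} (hδ : 0 < δ) :
    ∃ η ∈ Ioc 0 δ, ∀ k, Injective fun i ↦ S k i + η * T i := by
  obtain ⟨η, hη, hbad⟩ := (Ioc_infinite hδ).exists_notMem_finite
    (finite_range fun z : κ × ι × ι ↦ (S z.1 z.2.2 - S z.1 z.2.1) / (T z.2.1 - T z.2.2))
  refine ⟨η, hη, fun k i j hij ↦ by_contra fun hne ↦ hbad ⟨(k, i, j), ?_⟩⟩
  have : T i - T j ≠ 0 := sub_ne_zero.2 (hT.ne hne)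
  simp only at hij ⊢
  rw [div_eq_iff this]
  linarith

theorem exists_pos_forall_pairwise_le_abs_sub {κ ι : Type*} [Finite κ] [Finite ι]
    {v : κ → ι → ℝ} (hv : ∀ k, Injective (v k)) :
    ∃ ρ > 0, ∀ k, Pairwise fun i j ↦ ρ ≤ |v k i - v k j| := by
  rcases isEmpty_or_nonempty {z : κ × ι × ι // z.2.1 ≠ z.2.2} with h | h
  · exact ⟨1, one_pos, fun k i j hij ↦ (h.false ⟨(k, i, j), hij⟩).elim⟩
  · obtain ⟨⟨⟨k, i, j⟩, hij⟩, hmin⟩ := Finite.exists_min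
      fun z : {z : κ × ι × ι // z.2.1 ≠ z.2.2} ↦ |v z.1.1 z.1.2.1 - v z.1.1 z.1.2.2|
    exact ⟨_, abs_pos.2 (sub_ne_zero.2 ((hv k).ne hij)), fun k i j hij ↦ hmin ⟨(k, i, j), hij⟩⟩

theorem exists_pos_forall_abs_sub_lt {X κ : Type*} [PseudoMetricSpace X] [CompactSpace X]
    [Fintype κ] (f : κ → C(X, ℝ)) {ε : ℝ} (hε : 0 < ε) :
    ∃ δ > 0, ∀ x y, dist x y < δ → ∀ k, |f k x - f k y| < ε := by
  obtain ⟨δ, hδ, h⟩ := Metric.uniformContinuous_iff.1 (CompactSpace.uniformContinuous_of_continuous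
    (continuous_pi fun k ↦ (f k).continuous)) ε hε
  exact ⟨δ, hδ, fun x y hxy k ↦ (Real.dist_eq _ _).symm.trans_lt <|
    (dist_le_pi_dist _ _ k).trans_lt (h hxy)⟩

theorem card_le_card_filter_forall_not_add {α β : Type*} [Fintype α] [Fintype β]
    (R : α → β → Prop) [DecidableRel R] (h : ∀ b a a', R a b → R a' b → a = a') :
    Fintype.card α ≤ #{a | ∀ b, ¬R a b} + Fintype.card β := by
  classical
  have hcard : #{a | ¬∀ b, ¬R a b} ≤ Fintype.card β := calc
    _ ≤ #(univ.biUnion fun b ↦ {a | R a b}) := card_le_card fun a ha ↦ by simpa using ha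
    _ ≤ ∑ b, #{a | R a b} := card_biUnion_le
    _ ≤ ∑ _b : β, 1 := sum_le_sum fun b _ ↦ card_le_one.2 fun a ha a' ha' ↦
      h b a a' (by simpa using ha) (by simpa using ha')
    _ = Fintype.card β := by simp
  have := card_filter_add_card_filter_not (s := univ) fun a ↦ ∀ b, ¬R a b
  rw [card_univ] at this
  omega

theorem abs_sub_sum_le_of_card_le {ι : Type*} [Fintype ι] (G : Finset ι) (a : ι → ℝ)
    {z M ε k : ℝ} (hk : 0 < k) (hkG : k ≤ #G) (hz : |z| ≤ M) (hε : 0 ≤ ε)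
    (hG : ∀ q ∈ G, |a q - z / k| ≤ ε / k) (hB : ∀ q ∉ G, |a q| ≤ M / k) :
    |z - ∑ q, a q| ≤ ((Fintype.card ι - k) * M + Fintype.card ι * ε) / k := by
  classical
  have hGN : (#G : ℝ) ≤ Fintype.card ι := by exact_mod_cast card_le_univ G
  have hsplit : z - ∑ q, a q
      = z * (1 - #G / k) - ∑ q ∈ G, (a q - z / k) - ∑ q ∈ Gᶜ, a q := by
    rw [← sum_add_sum_compl G, sum_sub_distrib, sum_const, nsmul_eq_mul]
    ring
  have h1 : |z * (1 - #G / k)| ≤ M * (#G - k) / k := by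
    have : |1 - #G / k| = (#G - k) / k := by
      rw [abs_of_nonpos (by rw [sub_nonpos, le_div_iff₀ hk]; linarith)]
      field_simp
      ring
    rw [abs_mul, this, mul_div_assoc]
    exact mul_le_mul_of_nonneg_right hz (div_nonneg (by linarith) hk.le)
  have h2 : |∑ q ∈ G, (a q - z / k)| ≤ #G * ε / k :=
    (abs_sum_le_sum_abs _ _).trans <| by simpa [mul_div_assoc] using sum_le_sum hG
  have h3 : |∑ q ∈ Gᶜ, a q| ≤ (Fintype.card ι - #G) * M / k := by
    refine (abs_sum_le_sum_abs _ _).trans ?_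
    rw [← Nat.cast_sub (card_le_univ G), ← card_compl, mul_div_assoc]
    simpa using sum_le_sum fun q hq ↦ hB q (mem_compl.1 hq)
  have h4 := abs_sub (z * (1 - #G / k)) (∑ q ∈ G, (a q - z / k))
  have h5 := abs_sub (z * (1 - #G / k) - ∑ q ∈ G, (a q - z / k)) (∑ q ∈ Gᶜ, a q)
  have h6 : #G * ε / k ≤ Fintype.card ι * ε / k := by gcongr
  rw [hsplit]
  calc _ ≤ M * (#G - k) / k + Fintype.card ι * ε / k + (Fintype.card ι - #G) * M / k := by
        linarith
    _ = _ := by ring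

theorem AddMonoidHom.surjective_of_approx {E F : Type*} [NormedAddCommGroup E] [CompleteSpace E]
    [NormedAddCommGroup F] (f : E →+ F) (hf : Continuous f) {C θ : ℝ} (hθ₀ : 0 ≤ θ) (hθ : θ < 1)
    (h : ∀ y, ∃ x, ‖y - f x‖ ≤ θ * ‖y‖ ∧ ‖x‖ ≤ C * ‖y‖) : Surjective f := by
  intro y
  choose g hg using h
  set r : F → F := fun z ↦ z - f (g z)
  have hr : ∀ k, ‖r^[k] y‖ ≤ θ ^ k * ‖y‖ := fun k ↦ by
    induction k with
    | zero => simp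
    | succ k ih =>
      rw [iterate_succ_apply', pow_succ', mul_assoc]
      exact (hg _).1.trans (mul_le_mul_of_nonneg_left ih hθ₀)
  set u : ℕ → E := fun k ↦ g (r^[k] y)
  have hu : Summable u := .of_norm_bounded
    ((summable_geometric_of_lt_one hθ₀ hθ).mul_left (|C| * ‖y‖)) fun k ↦ calc
      ‖u k‖ ≤ C * ‖r^[k] y‖ := (hg _).2
      _ ≤ |C| * ‖r^[k] y‖ := mul_le_mul_of_nonneg_right (le_abs_self C) (norm_nonneg _)
      _ ≤ |C| * ‖y‖ * θ ^ k := by rw [mul_assoc, mul_comm _ (θ ^ k)]; gcongr; exact hr k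
  have hpartial : ∀ N : ℕ, f (∑ k ∈ Finset.range N, u k) = y - r^[N] y := fun N ↦ by
    induction N with
    | zero => simp
    | succ N ih =>
      rw [sum_range_succ, map_add, ih, iterate_succ_apply']
      simp only [r, u]
      abel
  have hlim : Tendsto (fun N ↦ y - r^[N] y) atTop (𝓝 y) := by
    simpa using tendsto_const_nhds.sub (squeeze_zero_norm hr
      ((tendsto_pow_atTop_nhds_zero_of_lt_one hθ₀ hθ).mul_const ‖y‖ |>.trans (by simp)))
  refine ⟨∑' k, u k, tendsto_nhds_unique ?_ hlim⟩
  simpa only [comp_def, hpartial] using (hf.tendsto _).comp hu.hasSum.tendsto_sum_nat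

namespace KolmogorovArnold

/-! ### Shifted grids -/

variable {n m : ℕ}

def gapWidth (n m : ℕ) : ℝ := (2 * (2 * n + 1) * m : ℝ)⁻¹

/-- The `j`-th gap of the system `q` is `[s, s + e]` with `s = 2 (q + j (2n + 1)) e`, so that as
`q` and `j` vary the gaps are the disjoint intervals `[2 i e, (2 i + 1) e]`. -/
def gapStart (m : ℕ) (q : Fin (2 * n + 1)) (j : ℕ) : ℝ :=
  2 * ((q + j * (2 * n + 1) : ℕ) : ℝ) * gapWidth n m

def InGap (m : ℕ) (q : Fin (2 * n + 1)) (x : ℝ) : Prop :=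
  ∃ j < m, gapStart m q j ≤ x ∧ x ≤ gapStart m q j + gapWidth n m

def goodLeft (m : ℕ) (q : Fin (2 * n + 1)) (j : ℕ) : I :=
  projIcc 0 1 zero_le_one (gapStart m q j - (m : ℝ)⁻¹ + gapWidth n m)

/-- The `j`-th interval of the system `q`, between its gaps `j - 1` and `j` (from `0` if
`j = 0`). -/
def goodInterval (m : ℕ) (q : Fin (2 * n + 1)) (j : ℕ) : Set ℝ :=
  Icc (goodLeft m q j : ℝ) (gapStart m q j)

variable {q q' : Fin (2 * n + 1)} {j j' : ℕ} {x : ℝ}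

lemma gapWidth_nonneg : 0 ≤ gapWidth n m := by unfold gapWidth; positivity

lemma gapWidth_pos (hm : 0 < m) : 0 < gapWidth n m := by unfold gapWidth; positivity

lemma inv_eq_gapWidth (n m : ℕ) : (m : ℝ)⁻¹ = 2 * (2 * n + 1) * gapWidth n m := by
  rw [gapWidth, mul_inv, ← mul_assoc, mul_inv_cancel₀ (by positivity), one_mul]

lemma gapWidth_le_inv : gapWidth n m ≤ (m : ℝ)⁻¹ := by
  rw [inv_eq_gapWidth n m]; nlinarith [gapWidth_nonneg (n := n) (m := m)]

lemma offset_add_two_mul_gapWidth_le_inv (q : Fin (2 * n + 1)) :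
    2 * (q : ℝ) * gapWidth n m + 2 * gapWidth n m ≤ (m : ℝ)⁻¹ := by
  have hq : (q : ℝ) ≤ 2 * n := by exact_mod_cast Nat.le_of_lt_succ q.isLt
  rw [inv_eq_gapWidth n m]; nlinarith [gapWidth_nonneg (n := n) (m := m)]

lemma gapStart_eq : gapStart m q j = j * (m : ℝ)⁻¹ + 2 * q * gapWidth n m := by
  rw [gapStart, inv_eq_gapWidth n m]; push_cast; ring

lemma gapStart_nonneg : 0 ≤ gapStart m q j := by
  unfold gapStart; have := gapWidth_nonneg (n := n) (m := m); positivity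

lemma gapStart_add_le (h : j < j') : gapStart m q j + (m : ℝ)⁻¹ ≤ gapStart m q j' := by
  have : (j : ℝ) + 1 ≤ j' := by exact_mod_cast h
  rw [gapStart_eq, gapStart_eq]; nlinarith [inv_nonneg.2 (Nat.cast_nonneg (α := ℝ) m)]

lemma gapStart_mono (h : j ≤ j') : gapStart m q j ≤ gapStart m q j' := by
  rcases h.eq_or_lt with rfl | h
  · rfl
  · exact le_trans (by simp) (gapStart_add_le (q := q) h)

lemma one_le_gapStart (hm : 0 < m) : 1 ≤ gapStart m q m := by
  rw [gapStart_eq, mul_inv_cancel₀ (by positivity), le_add_iff_nonneg_right]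
  have := gapWidth_nonneg (n := n) (m := m)
  positivity

lemma coe_goodLeft_le (hx : 0 ≤ x) (h : gapStart m q j - (m : ℝ)⁻¹ + gapWidth n m ≤ x) :
    (goodLeft m q j : ℝ) ≤ x := by
  rw [goodLeft, coe_projIcc]; exact max_le hx ((min_le_right _ _).trans h)

lemma le_coe_goodLeft (hj : j ≤ m) :
    gapStart m q j - (m : ℝ)⁻¹ + gapWidth n m ≤ goodLeft m q j := by
  have : (j : ℝ) * (m : ℝ)⁻¹ ≤ 1 := by
    rcases m.eq_zero_or_pos with rfl | hm
    · simp
    · rw [← div_eq_mul_inv, div_le_one (by positivity)]; exact_mod_cast hj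
  have hq := offset_add_two_mul_gapWidth_le_inv (n := n) (m := m) q
  rw [goodLeft, coe_projIcc, min_eq_right (by
    rw [gapStart_eq]; linarith [gapWidth_nonneg (n := n) (m := m)])]
  exact le_max_right _ _

lemma coe_goodLeft_le_gapStart : (goodLeft m q j : ℝ) ≤ gapStart m q j :=
  coe_goodLeft_le gapStart_nonneg (by linarith [gapWidth_le_inv (n := n) (m := m)])

lemma abs_sub_goodLeft_le (hj : j ≤ m) (hx : x ∈ goodInterval m q j) :
    |x - goodLeft m q j| ≤ (m : ℝ)⁻¹ := by
  rw [abs_of_nonneg (sub_nonneg.2 hx.1)]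
  linarith [hx.2, le_coe_goodLeft (q := q) hj, gapWidth_nonneg (n := n) (m := m)]

lemma eq_of_inGap_of_inGap (hm : 0 < m) (h : InGap m q x) (h' : InGap m q' x) : q = q' := by
  obtain ⟨j, -, h₁, h₂⟩ := h
  obtain ⟨j', -, h₁', h₂'⟩ := h'
  have he := gapWidth_pos (n := n) hm
  have key : ∀ i i' : ℕ, 2 * (i : ℝ) * gapWidth n m ≤ x →
      x ≤ 2 * (i' : ℝ) * gapWidth n m + gapWidth n m → i ≤ i' := fun i i' hi hi' ↦ by
    have : (2 * i : ℝ) ≤ 2 * i' + 1 := le_of_mul_le_mul_right (by linarith) he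
    have : i < i' + 1 := by exact_mod_cast (by linarith : (i : ℝ) < i' + 1)
    omega
  have hmod := congrArg (· % (2 * n + 1)) (le_antisymm (key _ _ h₁ h₂') (key _ _ h₁' h₂))
  simp only [Nat.add_mul_mod_self_right, Nat.mod_eq_of_lt q.isLt, Nat.mod_eq_of_lt q'.isLt] at hmod
  exact Fin.ext hmod

lemma exists_mem_goodInterval (hm : 0 < m) (hx : x ∈ I) (h : ¬InGap m q x) :
    ∃ j ≤ m, x ∈ goodInterval m q j := by
  classical
  have hxm : x ≤ gapStart m q m := hx.2.trans (one_le_gapStart hm)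
  have hP : ∃ j, x ≤ gapStart m q j := ⟨m, hxm⟩
  refine ⟨Nat.find hP, Nat.find_min' hP hxm, coe_goodLeft_le hx.1 ?_, Nat.find_spec hP⟩
  rcases hj : Nat.find hP with _ | i
  · rw [gapStart_eq]
    linarith [offset_add_two_mul_gapWidth_le_inv (n := n) (m := m) q,
      gapWidth_nonneg (n := n) (m := m), hx.1]
  · have hi : gapStart m q i < x := not_le.1 (Nat.find_min hP (by omega))
    have him : i < m := by have := Nat.find_min' hP hxm; omega
    have : gapStart m q i + gapWidth n m < x := not_le.1 fun h' ↦ h ⟨i, him, hi.le, h'⟩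
    simp only [gapStart_eq] at *
    push_cast
    linarith

lemma rampInterp_eq_of_mem_goodInterval (hm : 0 < m) (a : ℕ → ℝ) (hj : j ≤ m)
    (hx : x ∈ goodInterval m q j) : rampInterp a (gapStart m q) (gapWidth n m) m x = a j :=
  rampInterp_eq (gapWidth_pos hm) hj
    (fun i hi ↦ by
      linarith [gapStart_add_le (m := m) (q := q) hi, le_coe_goodLeft (q := q) hj, hx.1])
    (fun i hi _ ↦ hx.2.trans (gapStart_mono hi))

/-- In a gap `k` the interpolant lies between its values on the intervals `k` and `k + 1`, whose
left ends are both within `1 / m`. -/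
lemma exists_rampInterp_mem_uIcc (hm : 0 < m) (a : ℕ → ℝ) (hx : x ∈ I) :
    ∃ j ≤ m, ∃ j' ≤ m, |x - goodLeft m q j| ≤ (m : ℝ)⁻¹ ∧ |x - goodLeft m q j'| ≤ (m : ℝ)⁻¹ ∧
      rampInterp a (gapStart m q) (gapWidth n m) m x ∈ uIcc (a j) (a j') := by
  by_cases h : InGap m q x
  · obtain ⟨k, hk, h₁, h₂⟩ := h
    have hinv := gapWidth_le_inv (n := n) (m := m)
    have hsucc : gapStart m q (k + 1) = gapStart m q k + (m : ℝ)⁻¹ := by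
      rw [gapStart_eq, gapStart_eq]; push_cast; ring
    have hleft : (goodLeft m q (k + 1) : ℝ) ≤ gapStart m q k + gapWidth n m :=
      coe_goodLeft_le (add_nonneg gapStart_nonneg gapWidth_nonneg) (by rw [hsucc]; linarith)
    refine ⟨k, hk.le, k + 1, hk, ?_, ?_, rampInterp_mem_uIcc (gapWidth_pos hm) hk
      (fun i hi ↦ by linarith [gapStart_add_le (m := m) (q := q) hi])
      (fun i hi _ ↦ by linarith [gapStart_add_le (m := m) (q := q) hi])⟩
    · rw [abs_of_nonneg (by linarith [coe_goodLeft_le_gapStart (m := m) (q := q) (j := k)])]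
      linarith [le_coe_goodLeft (q := q) hk.le]
    · rw [abs_le]
      constructor <;> linarith [le_coe_goodLeft (q := q) (Nat.succ_le_of_lt hk)]
  · obtain ⟨j, hj, hxj⟩ := exists_mem_goodInterval hm hx h
    exact ⟨j, hj, j, hj, abs_sub_goodLeft_le hj hxj, abs_sub_goodLeft_le hj hxj, by
      rw [rampInterp_eq_of_mem_goodInterval hm a hj hxj]; exact left_mem_uIcc⟩

lemma abs_rampInterp_sub_le (hm : 0 < m) (f : C(I, ℝ)) (q : Fin (2 * n + 1)) {a : ℕ → ℝ}
    {ε : ℝ} (ha : ∀ j ≤ m, ∀ y : I, |(y : ℝ) - goodLeft m q j| ≤ (m : ℝ)⁻¹ → |a j - f y| ≤ ε)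
    (y : I) : |rampInterp a (gapStart m q) (gapWidth n m) m y - f y| ≤ ε := by
  obtain ⟨j, hj, j', hj', h, h', hmem⟩ := exists_rampInterp_mem_uIcc (q := q) hm a y.2
  rw [abs_sub_comm, mem_Icc_iff_abs_le]
  refine uIcc_subset_Icc ?_ ?_ hmem <;> rw [← mem_Icc_iff_abs_le, abs_sub_comm]
  exacts [ha j hj y h, ha j' hj' y h']

lemma exists_card_forall_not_inGap (hm : 0 < m) (x : Fin n → I) :
    ∃ G : Finset (Fin (2 * n + 1)), n + 1 ≤ #G ∧ ∀ q ∈ G, ∀ p, ¬InGap m q (x p) := by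
  classical
  have := card_le_card_filter_forall_not_add
    (fun (q : Fin (2 * n + 1)) (p : Fin n) ↦ InGap m q (x p)) fun _ _ _ ↦ eq_of_inGap_of_inGap hm
  rw [Fintype.card_fin, Fintype.card_fin] at this
  exact ⟨_, Nat.le_of_add_le_add_right ((by ring : n + 1 + n = 2 * n + 1).trans_le this),
    fun q hq ↦ by simpa using hq⟩

lemma exists_forall_mem_goodInterval (hm : 0 < m) {x : Fin n → I}
    (hx : ∀ p, ¬InGap m q (x p)) :
    ∃ J : Fin n → Fin (m + 1), ∀ p, (x p : ℝ) ∈ goodInterval m q (J p) := by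
  choose j hj hxj using fun p ↦ exists_mem_goodInterval hm (x p).2 (hx p)
  exact ⟨fun p ↦ ⟨j p, Nat.lt_succ_of_le (hj p)⟩, hxj⟩

lemma dist_goodLeft_le {x : Fin n → I} {J : Fin n → Fin (m + 1)}
    (hx : ∀ p, (x p : ℝ) ∈ goodInterval m q (J p)) :
    dist (fun p ↦ goodLeft m q (J p)) x ≤ (m : ℝ)⁻¹ :=
  (dist_pi_le_iff (by positivity)).2 fun p ↦ by
    rw [Subtype.dist_eq, Real.dist_eq, abs_sub_comm]
    exact abs_sub_goodLeft_le (Fin.is_le _) (hx p)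

/-! ### Inner functions -/

def Resolves (ψ : Fin (2 * n + 1) → Fin n → C(I, ℝ)) (m : ℕ) : Prop :=
  ∀ q, ∃ v : (Fin n → Fin (m + 1)) → ℝ, ∃ ρ > 0, (Pairwise fun J J' ↦ ρ ≤ |v J - v J'|) ∧
    ∀ J (x : Fin n → I), (∀ p, (x p : ℝ) ∈ goodInterval m q (J p)) →
      |∑ p, ψ q p (x p) - v J| ≤ ρ / 4

variable (n) in
structure Stage where
  m : ℕ
  m_pos : 0 < m
  tol : ℝ
  inv_le_tol : (m : ℝ)⁻¹ ≤ tol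
  ψ : Fin (2 * n + 1) → Fin n → C(I, ℝ)
  v : Fin (2 * n + 1) → (Fin n → Fin (m + 1)) → ℝ
  sum_eq : ∀ q J (x : Fin n → I), (∀ p, (x p : ℝ) ∈ goodInterval m q (J p)) →
    ∑ p, ψ q p (x p) = v q J
  v_injective : ∀ q, Injective (v q)

lemma Stage.tol_pos (s : Stage n) : 0 < s.tol :=
  (inv_pos.2 (Nat.cast_pos.2 s.m_pos)).trans_le s.inv_le_tol

def interpolate (ψ : Fin (2 * n + 1) → Fin n → C(I, ℝ)) (m : ℕ) (c : Fin n → ℕ → ℝ)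
    (q : Fin (2 * n + 1)) (p : Fin n) : C(I, ℝ) :=
  ⟨fun y ↦ rampInterp (fun j ↦ ψ q p (goodLeft m q j) + c p j) (gapStart m q) (gapWidth n m) m y,
    (continuous_rampInterp _ _ _ _).comp continuous_subtype_val⟩

lemma interpolate_apply_of_mem (hm : 0 < m) (ψ : Fin (2 * n + 1) → Fin n → C(I, ℝ))
    (c : Fin n → ℕ → ℝ) (p : Fin n) {y : I} (hj : j ≤ m) (hy : (y : ℝ) ∈ goodInterval m q j) :
    interpolate ψ m c q p y = ψ q p (goodLeft m q j) + c p j :=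
  rampInterp_eq_of_mem_goodInterval hm (fun j ↦ ψ q p (goodLeft m q j) + c p j) hj hy

lemma dist_interpolate_le (hm : 0 < m) {ψ : Fin (2 * n + 1) → Fin n → C(I, ℝ)}
    {c : Fin n → ℕ → ℝ} {ε : ℝ} (hε : 0 ≤ ε)
    (hψ : ∀ q p (x y : I), dist x y ≤ (m : ℝ)⁻¹ → |ψ q p x - ψ q p y| ≤ ε / 2)
    (hc : ∀ p j, j ≤ m → |c p j| ≤ ε / 2) : dist (interpolate ψ m c) ψ ≤ ε :=
  (dist_pi_le_iff hε).2 fun q ↦ (dist_pi_le_iff hε).2 fun p ↦ (ContinuousMap.dist_le hε).2 fun y ↦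
    (Real.dist_eq _ _).trans_le <| abs_rampInterp_sub_le hm (ψ q p) q (fun j hj z hz ↦ by
      have hnear := hψ q p (goodLeft m q j) z <| by
        rwa [Subtype.dist_eq, Real.dist_eq, abs_sub_comm]
      calc |ψ q p (goodLeft m q j) + c p j - ψ q p z|
          ≤ |ψ q p (goodLeft m q j) - ψ q p z| + |c p j| := by
            rw [add_sub_right_comm]; exact abs_add_le _ _
        _ ≤ ε := by linarith [hc p j hj]) y

lemma mul_pow_le_pow {b j p n : ℕ} (hj : j < b) (hp : p < n) : j * b ^ p ≤ b ^ n := calc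
  j * b ^ p ≤ b * b ^ p := Nat.mul_le_mul_right _ hj.le
  _ = b ^ (p + 1) := (pow_succ' _ _).symm
  _ ≤ b ^ n := Nat.pow_le_pow_right (by omega) hp

/-- The values on the intervals are shifted by `η j (m + 1) ^ p`, so that the shift of the cube `J`
is `η` times the integer with base-`(m + 1)` digits `J`; a generic `η` then makes the values of
distinct cubes distinct. -/
theorem exists_stage (ψ : Fin (2 * n + 1) → Fin n → C(I, ℝ)) {ε : ℝ} (hε : 0 < ε) :
    ∃ s : Stage n, s.tol = ε ∧ dist s.ψ ψ ≤ ε := by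
  obtain ⟨δ, hδ, hψδ⟩ := exists_pos_forall_abs_sub_lt (fun z : _ × _ ↦ ψ z.1 z.2) (half_pos hε)
  obtain ⟨m, hm, hmε, hmδ⟩ : ∃ m : ℕ, 0 < m ∧ (m : ℝ)⁻¹ < ε ∧ (m : ℝ)⁻¹ < δ := by
    obtain ⟨k, hk⟩ := exists_nat_one_div_lt (lt_min hε hδ)
    exact ⟨k + 1, k.succ_pos, by simpa using (lt_min_iff.1 hk).1,
      by simpa using (lt_min_iff.1 hk).2⟩
  have hB : (0 : ℝ) < (m + 1) ^ n := by positivity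
  obtain ⟨η, ⟨hη₀, hη⟩, hinj⟩ := exists_mem_Ioc_forall_injective_add_mul
    (fun q (J : Fin n → Fin (m + 1)) ↦ ∑ p, ψ q p (goodLeft m q (J p)))
    (T := fun J ↦ (finFunctionFinEquiv J : ℝ))
    (Nat.cast_injective.comp (Fin.val_injective.comp finFunctionFinEquiv.injective))
    (div_pos (half_pos hε) hB)
  set c : Fin n → ℕ → ℝ := fun p j ↦ η * (j * (m + 1) ^ (p : ℕ))
  have hc : ∀ p j, j ≤ m → |c p j| ≤ ε / 2 := fun p j hj ↦ by
    have : (j * (m + 1) ^ (p : ℕ) : ℝ) ≤ (m + 1) ^ n := by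
      exact_mod_cast mul_pow_le_pow (Nat.lt_succ_of_le hj) p.isLt
    rw [abs_of_nonneg (by positivity)]
    calc c p j ≤ ε / 2 / (m + 1) ^ n * (m + 1) ^ n := by simp only [c]; gcongr
      _ = ε / 2 := div_mul_cancel₀ _ hB.ne'
  have hv : ∀ q (J : Fin n → Fin (m + 1)), ∑ p, (ψ q p (goodLeft m q (J p)) + c p (J p))
      = ∑ p, ψ q p (goodLeft m q (J p)) + η * (finFunctionFinEquiv J : ℝ) := fun q J ↦ by
    simp [c, sum_add_distrib, mul_sum]
  let s : Stage n :=
    { m := m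
      m_pos := hm
      tol := ε
      inv_le_tol := hmε.le
      ψ := interpolate ψ m c
      v := fun q J ↦ ∑ p, (ψ q p (goodLeft m q (J p)) + c p (J p))
      sum_eq := fun q J x hx ↦ sum_congr rfl fun p _ ↦
        interpolate_apply_of_mem hm ψ c p (Fin.is_le _) (hx p)
      v_injective := fun q J J' h ↦ hinj q (by simpa only [hv] using h) }
  exact ⟨s, rfl, dist_interpolate_le hm hε.le
    (fun q p x y hxy ↦ (hψδ x y (hxy.trans_lt hmδ) (q, p)).le) hc⟩

namespace Stage

/-- The factor `8 (n + 1)` keeps the limit of the inner sums within a quarter of the separation of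
the values of every stage. -/
def Refines (s t : Stage n) : Prop :=
  t.tol ≤ s.tol / 2 ∧ (∀ q, Pairwise fun J J' ↦ 8 * (n + 1) * t.tol ≤ |s.v q J - s.v q J'|) ∧
    dist t.ψ s.ψ ≤ t.tol

lemma exists_refines (s : Stage n) : ∃ t, s.Refines t := by
  obtain ⟨ρ, hρ, hsep⟩ := exists_pos_forall_pairwise_le_abs_sub s.v_injective
  obtain ⟨t, ht, hdist⟩ := exists_stage s.ψ
    (lt_min (half_pos s.tol_pos) (by positivity : 0 < ρ / (8 * (n + 1))))
  refine ⟨t, ht ▸ min_le_left _ _, fun q J J' hJ ↦ (hsep q hJ).trans' ?_, ht ▸ hdist⟩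
  rw [ht, ← le_div_iff₀' (by positivity)]
  exact min_le_right _ _

lemma Refines.resolves {s t : Stage n} (hst : s.Refines t)
    {ψ : Fin (2 * n + 1) → Fin n → C(I, ℝ)} (hψ : dist s.ψ ψ ≤ 2 * t.tol) :
    Resolves ψ s.m := fun q ↦ by
  have ht := t.tol_pos
  refine ⟨s.v q, 8 * (n + 1) * t.tol, by positivity, hst.2.1 q, fun J x hx ↦ ?_⟩
  rw [← s.sum_eq q J x hx, ← sum_sub_distrib]
  calc |∑ p, (ψ q p (x p) - s.ψ q p (x p))| ≤ ∑ p, |ψ q p (x p) - s.ψ q p (x p)| :=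
        abs_sum_le_sum_abs _ _
    _ ≤ ∑ _p : Fin n, 2 * t.tol := sum_le_sum fun p _ ↦ by
        rw [← Real.dist_eq, dist_comm]
        exact (ContinuousMap.dist_apply_le_dist _).trans <|
          (dist_le_pi_dist _ _ p).trans <| (dist_le_pi_dist _ _ q).trans hψ
    _ ≤ 8 * (n + 1) * t.tol / 4 := by simp; nlinarith

end Stage

variable (n) in
def stageSeq : ℕ → Stage n
  | 0 => (exists_stage 0 one_pos).choose
  | i + 1 => (stageSeq i).exists_refines.choose

lemma stageSeq_refines (i : ℕ) : (stageSeq n i).Refines (stageSeq n (i + 1)) :=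
  (stageSeq n i).exists_refines.choose_spec

lemma tol_stageSeq_add_le (k i : ℕ) :
    (stageSeq n (k + i)).tol ≤ (stageSeq n k).tol / 2 ^ i := by
  induction i with
  | zero => simp
  | succ i ih => calc
      _ ≤ (stageSeq n (k + i)).tol / 2 := (stageSeq_refines (k + i)).1
      _ ≤ (stageSeq n k).tol / 2 ^ i / 2 := by gcongr
      _ = _ := by rw [pow_succ, div_div]

lemma dist_stageSeq_le (k i : ℕ) : dist (stageSeq n (i + k)).ψ (stageSeq n (i + 1 + k)).ψ ≤
    2 * (stageSeq n (k + 1)).tol / 2 / 2 ^ i := by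
  rw [dist_comm]
  calc _ ≤ (stageSeq n (i + k + 1)).tol := by
        rw [add_right_comm]; exact (stageSeq_refines (i + k)).2.2
    _ = (stageSeq n (k + 1 + i)).tol := by rw [add_comm i k, add_right_comm]
    _ ≤ _ := tol_stageSeq_add_le _ _
    _ = _ := by ring

variable (n) in
theorem exists_resolving : ∃ ψ : Fin (2 * n + 1) → Fin n → C(I, ℝ),
    ∀ δ > 0, ∃ m : ℕ, 0 < m ∧ (m : ℝ)⁻¹ < δ ∧ Resolves ψ m := by
  obtain ⟨ψ, hψ⟩ := cauchySeq_tendsto_of_complete <| by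
    simpa using cauchySeq_of_le_geometric_two (dist_stageSeq_le (n := n) 0)
  refine ⟨ψ, fun δ hδ ↦ ?_⟩
  have h₀ := (stageSeq n 0).tol_pos
  obtain ⟨k, hk⟩ := exists_pow_lt_of_lt_one (div_pos hδ h₀) one_half_lt_one
  have hdist := dist_le_of_le_geometric_two_of_tendsto₀ (dist_stageSeq_le k)
    ((tendsto_add_atTop_iff_nat k).2 hψ)
  refine ⟨_, (stageSeq n k).m_pos, ?_, (stageSeq_refines k).resolves (by simpa using hdist)⟩
  calc _ ≤ (stageSeq n k).tol := (stageSeq n k).inv_le_tol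
    _ ≤ (stageSeq n 0).tol / 2 ^ k := by simpa using tol_stageSeq_add_le (n := n) 0 k
    _ = (1 / 2) ^ k * (stageSeq n 0).tol := by rw [one_div_pow]; ring
    _ < δ / (stageSeq n 0).tol * (stageSeq n 0).tol := by gcongr
    _ = δ := div_mul_cancel₀ _ h₀.ne'

/-! ### Outer functions -/

section OuterSum

variable {X ι : Type*} [TopologicalSpace X] [Fintype ι]

def outerSum (g : ι → C(X, ℝ)) : (ι → ℝ →ᵇ ℝ) →+ C(X, ℝ) where
  toFun Φ := ∑ q, (Φ q).toContinuousMap.comp (g q)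
  map_zero' := by ext; simp
  map_add' Φ Ψ := by ext; simp [sum_add_distrib]

@[simp]
lemma outerSum_apply (g : ι → C(X, ℝ)) (Φ : ι → ℝ →ᵇ ℝ) (x : X) :
    outerSum g Φ x = ∑ q, Φ q (g q x) := by
  simp [outerSum]

lemma continuous_outerSum [CompactSpace X] (g : ι → C(X, ℝ)) : Continuous (outerSum g) :=
  AddMonoidHomClass.continuous_of_bound _ (Fintype.card ι) fun Φ ↦
    (ContinuousMap.norm_le _ (by positivity)).2 fun x ↦ calc
      ‖outerSum g Φ x‖ ≤ ∑ q, ‖Φ q (g q x)‖ := by rw [outerSum_apply]; exact norm_sum_le _ _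
      _ ≤ ∑ _q : ι, ‖Φ‖ :=
        sum_le_sum fun q _ ↦ (norm_coe_le_norm _ _).trans (norm_le_pi_norm Φ q)
      _ = _ := by simp

end OuterSum

def innerSum (ψ : Fin (2 * n + 1) → Fin n → C(I, ℝ)) (q : Fin (2 * n + 1)) :
    C(Fin n → I, ℝ) :=
  ∑ p, (ψ q p).comp (ContinuousMap.eval p)

@[simp]
lemma innerSum_apply (ψ : Fin (2 * n + 1) → Fin n → C(I, ℝ)) (q : Fin (2 * n + 1))
    (x : Fin n → I) : innerSum ψ q x = ∑ p, ψ q p (x p) := by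
  simp [innerSum]

/-- At each point at least `n + 1` of the `2 n + 1` systems see it inside a cube, where the outer
function reproduces `F / (n + 1)` up to the oscillation of `F` on the cube; the at most `n`
remaining terms are each bounded by `‖F‖ / (n + 1)`. -/
theorem exists_outerSum_approx {ψ : Fin (2 * n + 1) → Fin n → C(I, ℝ)}
    (hψ : ∀ δ > 0, ∃ m : ℕ, 0 < m ∧ (m : ℝ)⁻¹ < δ ∧ Resolves ψ m) (F : C(Fin n → I, ℝ)) :
    ∃ Φ, ‖F - outerSum (innerSum ψ) Φ‖ ≤ (4 * n + 1) / (4 * n + 4) * ‖F‖ ∧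
      ‖Φ‖ ≤ 1 / (n + 1) * ‖F‖ := by
  rcases (norm_nonneg F).eq_or_lt with hM | hM
  · exact ⟨0, by simp [← hM], by simp [← hM]⟩
  set ε := ‖F‖ / (4 * (2 * n + 1))
  obtain ⟨δ, hδ, hFδ⟩ := Metric.uniformContinuous_iff.1
    (CompactSpace.uniformContinuous_of_continuous F.continuous) ε (by positivity)
  obtain ⟨m, hm, hmδ, hres⟩ := hψ δ hδ
  choose v ρ hρ hsep hclose using hres
  choose Φ hΦnorm hΦeq using fun q ↦ exists_bcf_eq_near_of_pairwise (hρ q)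
    (by positivity : 0 ≤ ‖F‖ / (n + 1)) (hsep q)
    (w := fun J ↦ F (fun p ↦ goodLeft m q (J p)) / (n + 1)) fun J ↦ by
      rw [abs_div, abs_of_pos (by positivity : (0 : ℝ) < n + 1)]
      gcongr
      exact F.norm_coe_le_norm _
  refine ⟨Φ, (ContinuousMap.norm_le _ (by positivity)).2 fun x ↦ ?_,
    (pi_norm_le_iff_of_nonneg (by positivity)).2 fun q ↦ (hΦnorm q).trans_eq (by ring)⟩
  obtain ⟨G, hG, hGx⟩ := exists_card_forall_not_inGap hm x
  have key := abs_sub_sum_le_of_card_le G (fun q ↦ Φ q (innerSum ψ q x)) (M := ‖F‖) (ε := ε)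
    (k := n + 1) (by positivity) (by exact_mod_cast hG) (F.norm_coe_le_norm x) (by positivity)
    (fun q hq ↦ ?_) (fun q _ ↦ (norm_coe_le_norm _ _).trans (hΦnorm q))
  · rw [ContinuousMap.sub_apply, outerSum_apply, Real.norm_eq_abs]
    refine key.trans_eq ?_
    simp only [Fintype.card_fin, ε]
    push_cast
    field_simp
    ring
  · obtain ⟨J, hJ⟩ := exists_forall_mem_goodInterval hm (hGx q hq)
    rw [hΦeq q J _ (by rw [innerSum_apply]; exact hclose q J x hJ), ← sub_div, abs_div,
      abs_of_pos (by positivity : (0 : ℝ) < n + 1), ← Real.dist_eq]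
    gcongr
    exact (hFδ ((dist_goodLeft_le hJ).trans_lt hmδ)).le

end KolmogorovArnold

end

theorem kolmogorov_arnold_general (n : ℕ)
    (f : (Fin n → Set.Icc (0 : ℝ) 1) → ℝ) (hf : Continuous f) :
    ∃ (Φ : Fin (2 * n + 1) → ℝ → ℝ)
      (φ : Fin (2 * n + 1) → Fin n → Set.Icc (0 : ℝ) 1 → ℝ),
      (∀ q, Continuous (Φ q)) ∧ (∀ q p, Continuous (φ q p)) ∧
      ∀ x : Fin n → Set.Icc (0 : ℝ) 1,
        f x = ∑ q, Φ q (∑ p, φ q p (x p)) := by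
  obtain ⟨ψ, hψ⟩ := KolmogorovArnold.exists_resolving n
  obtain ⟨Φ, hΦ⟩ := (KolmogorovArnold.outerSum (KolmogorovArnold.innerSum ψ)).surjective_of_approx
    (KolmogorovArnold.continuous_outerSum _) (by positivity)
    ((div_lt_one (by positivity)).2 (by linarith)) (KolmogorovArnold.exists_outerSum_approx hψ)
    ⟨f, hf⟩
  refine ⟨fun q ↦ Φ q, fun q p ↦ ψ q p, fun q ↦ (Φ q).continuous, fun q p ↦ (ψ q p).continuous,
    fun x ↦ ?_⟩
  simpa using (DFunLike.congr_fun hΦ x).symm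

/-- Kolmogorov–Arnold representation theorem. -/
theorem kolmogorov_arnold (n : ℕ) (hn : 1 ≤ n)
    (f : (Fin n → Set.Icc (0 : ℝ) 1) → ℝ) (hf : Continuous f) :
    ∃ (Φ : Fin (2 * n + 1) → ℝ → ℝ)
      (φ : Fin (2 * n + 1) → Fin n → Set.Icc (0 : ℝ) 1 → ℝ),
      (∀ q, Continuous (Φ q)) ∧ (∀ q p, Continuous (φ q p)) ∧
      ∀ x : Fin n → Set.Icc (0 : ℝ) 1,
        f x = ∑ q, Φ q (∑ p, φ q p (x p)) :=
  kolmogorov_arnold_general n f hf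
end

section
/- Let ξ^(1), …, ξ^(J) ∈ ℝ^{N_ξ} be an ensemble with J ≥ 2, let ℋ : ℝ^{N_ξ} → ℝ^{N_z} be any map, let ℋ̄ = (1/J)Σ_j ℋ(ξ^(j)), and define the empirical cross-covariance C^{ξz} = (1/(J−1)) Σ_{j=1}^{J} (ξ^(j) − ξ̄)(ℋ(ξ^(j)) − ℋ̄)ᵀ, where ξ̄ = (1/J)Σ_j ξ^(j). Then for any matrix B ∈ ℝ^{N_z×N_z} and any vectors z, η^(1), …, η^(J) ∈ ℝ^{N_z}, every updated ensemble member ξ₊^(j) = ξ^(j) + C^{ξz} B (z − ℋ(ξ^(j)) − η^(j)) lies in the linear span of {ξ^(1), …, ξ^(J)} (one-step subspace property of the ensemble Kalman update). -/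
open Matrix BigOperators

lemma vecMulVec_mulVec' {m n : Type*} [Fintype n] (a : m → ℝ) (b : n → ℝ)
    (w : n → ℝ) : (vecMulVec a b).mulVec w = (b ⬝ᵥ w) • a := by
  ext i
  simp only [vecMulVec, mulVec, dotProduct, of_apply, Pi.smul_apply, smul_eq_mul,
    Finset.sum_mul]
  exact Finset.sum_congr rfl fun x _ => by ring

lemma sum_mulVec' {m n ι : Type*} [Fintype n] (s : Finset ι)
    (M : ι → Matrix m n ℝ) (w : n → ℝ) :
    (∑ k ∈ s, M k).mulVec w = ∑ k ∈ s, (M k).mulVec w := by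
  ext i
  simp only [mulVec, dotProduct, Finset.sum_apply, Matrix.sum_apply, Finset.sum_mul]
  rw [Finset.sum_comm]

/-- One-step subspace property of the ensemble Kalman update: every updated
ensemble member lies in the span of the current ensemble. -/
theorem ensemble_kalman_update_mem_span {J Nξ Nz : ℕ} (hJ : 2 ≤ J)
    (ξ : Fin J → Fin Nξ → ℝ) (ℋ : (Fin Nξ → ℝ) → Fin Nz → ℝ)
    (ξbar : Fin Nξ → ℝ) (hbar : ξbar = (J : ℝ)⁻¹ • ∑ j, ξ j)
    (ℋbar : Fin Nz → ℝ) (hℋbar : ℋbar = (J : ℝ)⁻¹ • ∑ j, ℋ (ξ j))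
    (Cξz : Matrix (Fin Nξ) (Fin Nz) ℝ)
    (hCξz : Cξz = ((J : ℝ) - 1)⁻¹ • ∑ j, vecMulVec (ξ j - ξbar) (ℋ (ξ j) - ℋbar))
    (B : Matrix (Fin Nz) (Fin Nz) ℝ) (z : Fin Nz → ℝ) (η : Fin J → Fin Nz → ℝ) :
    ∀ j : Fin J,
      ξ j + Cξz.mulVec (B.mulVec (z - ℋ (ξ j) - η j))
        ∈ Submodule.span ℝ (Set.range ξ) := by
  intro j
  have hmem : ∀ k : Fin J, ξ k ∈ Submodule.span ℝ (Set.range ξ) := fun k =>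
    Submodule.subset_span ⟨k, rfl⟩
  have hbarmem : ξbar ∈ Submodule.span ℝ (Set.range ξ) := by
    rw [hbar]
    exact Submodule.smul_mem _ _ (Submodule.sum_mem _ fun k _ => hmem k)
  set w := B.mulVec (z - ℋ (ξ j) - η j)
  rw [hCξz, smul_mulVec, sum_mulVec']
  refine Submodule.add_mem _ (hmem j) (Submodule.smul_mem _ _ (Submodule.sum_mem _
    fun k _ => ?_))
  rw [vecMulVec_mulVec']
  exact Submodule.smul_mem _ _ (Submodule.sub_mem _ (hmem k) hbarmem)
end

section
/- Let ℋ : ℝ^{N_ξ} → ℝ^{N_z} be any map, let Γ_ℋ ∈ ℝ^{N_z×N_z} be symmetric positive definite, let z ∈ ℝ^{N_z}, and let {ξ₀^(j)}_{j=1}^{J} ⊂ ℝ^{N_ξ} with J ≥ 2 be an initial ensemble. Define recursively, for n ≥ 0: ξ̄_n = (1/J)Σ_j ξ_n^(j), τ_n^(j) = ξ_n^(j) − ξ̄_n, ℋ̄_n = (1/J)Σ_j ℋ(ξ_n^(j)), C_n^{zz} = (1/(J−1)) Σ_j (ℋ(ξ_n^(j)) − ℋ̄_n)(ℋ(ξ_n^(j))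 − ℋ̄_n)ᵀ, C_n^{ξz} = (1/(J−1)) Σ_j τ_n^(j)(ℋ(ξ_n^(j)) − ℋ̄_n)ᵀ, and ξ_{n+1}^(j) = ξ_n^(j) + C_n^{ξz}(C_n^{zz} + Γ_ℋ)⁻¹(z − ℋ(ξ_n^(j))). Then C_n^{zz} + Γ_ℋ is invertible for every n, and for every n ≥ 0 and every j, the iterate ξ_n^(j) lies in the subspace A = span{ξ₀^(1), …, ξ₀^(J)} spanned by the initial ensemble (subspace property of ensemble Kalman inversion). -/
open Matrix BigOperators

/- The Kalman gain `Cξz (Czz + Γ)⁻¹` maps into the span of the deviations `ξ n j - ξbar n`, because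
`Cξz` is a sum of outer products `vecMulVec (ξ n j - ξbar n) _`; these deviations lie in the span of the
current ensemble, so by induction every iterate stays in the span of the initial one. Invertibility
holds since `Czz` is a nonnegative multiple of a sum of outer products `v vᵀ`, hence positive
semidefinite, and adding the positive definite `Γ` gives a positive definite matrix. -/

theorem Matrix.posSemidef_smul_sum_vecMulVec_self {ι n : Type*} [Fintype n]
    (s : Finset ι) {c : ℝ} (hc : 0 ≤ c) (v : ι → n → ℝ) :
    (c • ∑ i ∈ s, vecMulVec (v i) (v i)).PosSemidef :=
  (posSemidef_sum s fun i _ => by simpa using posSemidef_vecMulVec_self_star (v i)).smul hc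

theorem Matrix.sum_vecMulVec_mulVec_mem {ι m n R : Type*} [CommSemiring R] [Fintype n]
    (p : Submodule R (m → R)) (s : Finset ι) (u : ι → m → R) (w : ι → n → R)
    (hu : ∀ i ∈ s, u i ∈ p) (x : n → R) :
    (∑ i ∈ s, vecMulVec (u i) (w i)) *ᵥ x ∈ p := by
  rw [sum_mulVec]
  refine p.sum_mem fun i hi => ?_
  rw [vecMulVec_mulVec, op_smul_eq_smul]
  exact p.smul_mem _ (hu i hi)

theorem eki_subspace_property_general {J Nξ Nz : ℕ} (hJ : 2 ≤ J)
    (ℋ : (Fin Nξ → ℝ) → Fin Nz → ℝ)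
    (Γℋ : Matrix (Fin Nz) (Fin Nz) ℝ) (hΓℋ : Γℋ.PosDef)
    (z : Fin Nz → ℝ)
    (ξ : ℕ → Fin J → Fin Nξ → ℝ)
    (ξbar : ℕ → Fin Nξ → ℝ) (hξbar : ∀ n, ξbar n = (J : ℝ)⁻¹ • ∑ j, ξ n j)
    (ℋbar : ℕ → Fin Nz → ℝ)
    (Czz : ℕ → Matrix (Fin Nz) (Fin Nz) ℝ)
    (hCzz : ∀ n, Czz n
      = ((J : ℝ) - 1)⁻¹ • ∑ j, vecMulVec (ℋ (ξ n j) - ℋbar n) (ℋ (ξ n j) - ℋbar n))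
    (Cξz : ℕ → Matrix (Fin Nξ) (Fin Nz) ℝ)
    (hCξz : ∀ n, Cξz n
      = ((J : ℝ) - 1)⁻¹ • ∑ j, vecMulVec (ξ n j - ξbar n) (ℋ (ξ n j) - ℋbar n))
    (hstep : ∀ n j, ξ (n + 1) j
      = ξ n j + (Cξz n).mulVec ((Czz n + Γℋ)⁻¹.mulVec (z - ℋ (ξ n j)))) :
    (∀ n, IsUnit (Czz n + Γℋ)) ∧
    ∀ n j, ξ n j ∈ Submodule.span ℝ (Set.range (ξ 0)) := by
  have hc : (0 : ℝ) ≤ ((J : ℝ) - 1)⁻¹ := by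
    have : (2 : ℝ) ≤ J := by exact_mod_cast hJ
    exact inv_nonneg.mpr (by linarith)
  refine ⟨fun n => ?_, fun n => ?_⟩
  · have hCzz_psd : (Czz n).PosSemidef := hCzz n ▸ posSemidef_smul_sum_vecMulVec_self _ hc _
    exact (PosDef.posSemidef_add hCzz_psd hΓℋ).isUnit
  set A := Submodule.span ℝ (Set.range (ξ 0))
  induction n with
  | zero => exact fun j => Submodule.subset_span ⟨j, rfl⟩
  | succ n ih =>
    intro j
    have hξbar_mem : ξbar n ∈ A := hξbar n ▸ A.smul_mem _ (A.sum_mem fun k _ => ih k)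
    rw [hstep n j, hCξz n, smul_mulVec]
    exact A.add_mem (ih j) <| A.smul_mem _ <|
      sum_vecMulVec_mulVec_mem A _ _ _ (fun k _ => A.sub_mem (ih k) hξbar_mem) _

/-- Subspace property of ensemble Kalman inversion: `Cₙᶻᶻ + Γ_ℋ` is invertible
at every iteration, and every iterate stays in the span of the initial ensemble. -/
theorem eki_subspace_property {J Nξ Nz : ℕ} (hJ : 2 ≤ J)
    (ℋ : (Fin Nξ → ℝ) → Fin Nz → ℝ)
    (Γℋ : Matrix (Fin Nz) (Fin Nz) ℝ) (hΓℋ : Γℋ.PosDef)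
    (z : Fin Nz → ℝ)
    (ξ : ℕ → Fin J → Fin Nξ → ℝ)
    (ξbar : ℕ → Fin Nξ → ℝ) (hξbar : ∀ n, ξbar n = (J : ℝ)⁻¹ • ∑ j, ξ n j)
    (ℋbar : ℕ → Fin Nz → ℝ) (hℋbar : ∀ n, ℋbar n = (J : ℝ)⁻¹ • ∑ j, ℋ (ξ n j))
    (Czz : ℕ → Matrix (Fin Nz) (Fin Nz) ℝ)
    (hCzz : ∀ n, Czz n
      = ((J : ℝ) - 1)⁻¹ • ∑ j, vecMulVec (ℋ (ξ n j) - ℋbar n) (ℋ (ξ n j) - ℋbar n))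
    (Cξz : ℕ → Matrix (Fin Nξ) (Fin Nz) ℝ)
    (hCξz : ∀ n, Cξz n
      = ((J : ℝ) - 1)⁻¹ • ∑ j, vecMulVec (ξ n j - ξbar n) (ℋ (ξ n j) - ℋbar n))
    (hstep : ∀ n j, ξ (n + 1) j
      = ξ n j + (Cξz n).mulVec ((Czz n + Γℋ)⁻¹.mulVec (z - ℋ (ξ n j)))) :
    (∀ n, IsUnit (Czz n + Γℋ)) ∧
    ∀ n j, ξ n j ∈ Submodule.span ℝ (Set.range (ξ 0)) :=
  eki_subspace_property_general hJ ℋ Γℋ hΓℋ z ξ ξbar hξbar ℋbar Czz hCzz Cξz hCξz hstep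
end
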